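/- arXiv:1411.3877 — 3 statements merged into one kernel-verified Lean document; each statement's English description precedes it below -/
import Mathlib

section
/- Fix a positive integer M, finite-dimensional SL₂(ℤ)-representations ρ and σ with finite index kernels, and weights k, l ∈ ℤ. Let π_{M,ρ,σ} : (T_M ρ) ⊗ (T_M σ) → T_M(ρ ⊗ σ) be the homomorphism sending (v ⊗ 𝔢_m) ⊗ (w ⊗ 𝔢_{m′}) to (v ⊗ w) ⊗ 𝔢_m if m = m′ and to 0 otherwise. Then postcomposition with π_{M,ρ,σ} maps M_k(T_M ρ ⊗ T_M σ) into M_k(T_M(ρ ⊗ σ)), and for all f ∈ M_k(ρ) and g ∈ M_l(σ) one has π_{M,ρ,σ} ∘ ((T_M f) ⊗ (T_M g)) = T_M(f ⊗ g). -/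
open scoped MatrixGroups Manifold Kronecker ComplexConjugate Classical ComplexOrder
open Matrix UpperHalfPlane Complex Filter MeasureTheory CongruenceSubgroup

noncomputable section

namespace VVMF

abbrev GL2ℤ := Matrix (Fin 2) (Fin 2) ℤ

/-- The automorphy factor `c τ + d` for `γ ∈ SL(2,ℤ)`. -/
def denomZ (γ : SL(2, ℤ)) (τ : ℍ) : ℂ :=
  ((γ 1 0 : ℤ) : ℂ) * (τ : ℂ) + ((γ 1 1 : ℤ) : ℂ)

/-- `ρ` is a (matrix) representation of `SL(2,ℤ)`. -/
def IsRep {ι : Type*} [Fintype ι] (ρ : SL(2, ℤ) → Matrix ι ι ℂ) : Prop :=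
  ρ 1 = 1 ∧ ∀ γ δ : SL(2, ℤ), ρ (γ * δ) = ρ γ * ρ δ

/-- The weight-`k` slash action `f ∣_{k,ρ} γ` on vector-valued functions. -/
def vslash {ι : Type*} [Fintype ι] (k : ℤ) (ρ : SL(2, ℤ) → Matrix ι ι ℂ)
    (γ : SL(2, ℤ)) (f : ℍ → ι → ℂ) : ℍ → ι → ℂ :=
  fun τ => (denomZ γ τ) ^ (-k) • (ρ γ⁻¹).mulVec (f (γ • τ))

/-- Vector-valued modular form of weight `k` and type `ρ`: holomorphic,
slash-invariant, with all components (equivalently, all functionals) bounded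
towards `i∞`. -/
def IsVModForm {ι : Type*} [Fintype ι] (k : ℤ) (ρ : SL(2, ℤ) → Matrix ι ι ℂ)
    (f : ℍ → ι → ℂ) : Prop :=
  (∀ i, MDifferentiable 𝓘(ℂ) 𝓘(ℂ) (fun τ : ℍ => f τ i)) ∧
  (∀ γ : SL(2, ℤ), vslash k ρ γ f = f) ∧
  (∀ i, IsBoundedAtImInfty (fun τ : ℍ => f τ i))

/-- Vector-valued cusp form. -/
def IsVCuspForm {ι : Type*} [Fintype ι] (k : ℤ) (ρ : SL(2, ℤ) → Matrix ι ι ℂ)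
    (f : ℍ → ι → ℂ) : Prop :=
  (∀ i, MDifferentiable 𝓘(ℂ) 𝓘(ℂ) (fun τ : ℍ => f τ i)) ∧
  (∀ γ : SL(2, ℤ), vslash k ρ γ f = f) ∧
  (∀ i, IsZeroAtImInfty (fun τ : ℍ => f τ i))

/-- The space `M_k(ρ)` of modular forms of weight `k` and type `ρ`. -/
def Mk {ι : Type*} [Fintype ι] (k : ℤ) (ρ : SL(2, ℤ) → Matrix ι ι ℂ) :
    Set (ℍ → ι → ℂ) := {f | IsVModForm k ρ f}

/-- The trivial one-dimensional representation `𝟙` of `SL(2,ℤ)`. -/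
def oneRep : SL(2, ℤ) → Matrix Unit Unit ℂ := fun _ => 1

/-- The scalar slash action on ℂ-valued functions. -/
def cslash (k : ℤ) (γ : SL(2, ℤ)) (f : ℍ → ℂ) : ℍ → ℂ :=
  fun τ => (denomZ γ τ) ^ (-k) * f (γ • τ)

/-- A Dirichlet character mod `N` evaluated on the lower right entry `d(γ)`. -/
def dirSL {N : ℕ} (χ : DirichletCharacter ℂ N) (γ : SL(2, ℤ)) : ℂ :=
  χ (((γ 1 1 : ℤ) : ZMod N))

/-- Classical modular form of weight `k` for `Γ₀(N)` and Dirichlet character `χ`. -/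
def IsModFormChi {N : ℕ} (k : ℤ) (χ : DirichletCharacter ℂ N) (f : ℍ → ℂ) : Prop :=
  MDifferentiable 𝓘(ℂ) 𝓘(ℂ) f ∧
  (∀ γ ∈ Gamma0 N, (fun τ => dirSL χ γ⁻¹ * cslash k γ f τ) = f) ∧
  (∀ γ : SL(2, ℤ), IsBoundedAtImInfty (cslash k γ f))

/-- Classical cusp form of weight `k` for `Γ₀(N)` and Dirichlet character `χ`. -/
def IsCuspFormChi {N : ℕ} (k : ℤ) (χ : DirichletCharacter ℂ N) (f : ℍ → ℂ) : Prop :=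
  MDifferentiable 𝓘(ℂ) 𝓘(ℂ) f ∧
  (∀ γ ∈ Gamma0 N, (fun τ => dirSL χ γ⁻¹ * cslash k γ f τ) = f) ∧
  (∀ γ : SL(2, ℤ), IsZeroAtImInfty (cslash k γ f))

/-! ### The sets `Δ_M` and vector-valued Hecke operators -/

/-- Membership in `Δ_M`: upper triangular, positive diagonal (automatic for `M > 0`),
determinant `M`, and `0 ≤ b < d`. -/
def DeltaPred (M : ℕ) (m : GL2ℤ) : Prop :=
  m 1 0 = 0 ∧ 0 < m 0 0 ∧ m 0 0 * m 1 1 = (M : ℤ) ∧ 0 ≤ m 0 1 ∧ m 0 1 < m 1 1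

/-- The set `Δ_M` of upper triangular matrices `(a b; 0 d)`, `a d = M`, `0 ≤ b < d`. -/
def Delta (M : ℕ) : Type := {m : GL2ℤ // DeltaPred M m}

instance (M : ℕ) : Finite (Delta M) := by
  have key : ∀ m : Delta M, m.1 0 0 ≤ (M : ℤ) ∧ m.1 0 1 ≤ (M : ℤ) ∧ m.1 1 1 ≤ (M : ℤ) := by
    rintro ⟨m, hc, ha, hdet, hb0, hbd⟩
    have hd : 1 ≤ m 1 1 := by nlinarith
    have ha' : 1 ≤ m 0 0 := ha
    refine ⟨?_, ?_, ?_⟩ <;> nlinarith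
  refine Finite.of_injective
    (fun m : Delta M => ((⟨(m.1 0 0).toNat, ?_⟩ : Fin (M+1)), (⟨(m.1 0 1).toNat, ?_⟩ : Fin (M+1)),
      (⟨(m.1 1 1).toNat, ?_⟩ : Fin (M+1)))) ?_
  · have := key m; omega
  · have := key m; omega
  · have := key m; omega
  · intro m m' h
    have h1 := congrArg (fun p => (p.1 : Fin (M+1)).val) h
    have h2 := congrArg (fun p => (p.2.1 : Fin (M+1)).val) h
    have h3 := congrArg (fun p => (p.2.2 : Fin (M+1)).val) h
    simp only at h1 h2 h3
    have e1 : m.1 0 0 = m'.1 0 0 := by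
      have p1 := m.2.2.1; have p2 := m'.2.2.1
      omega
    have e2 : m.1 0 1 = m'.1 0 1 := by
      have p1 := m.2.2.2.2.1; have p2 := m'.2.2.2.2.1
      omega
    have e3 : m.1 1 1 = m'.1 1 1 := by
      have p1 := m.2.2.2.2.1; have p2 := m'.2.2.2.2.1
      have q1 := m.2.2.2.2.2; have q2 := m'.2.2.2.2.2
      omega
    apply Subtype.ext
    ext i j
    fin_cases i <;> fin_cases j
    · exact e1
    · exact e2
    · show m.1 1 0 = m'.1 1 0
      rw [m.2.1, m'.2.1]
    · exact e3

instance (M : ℕ) : Fintype (Delta M) := Fintype.ofFinite _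

/-- `HeckeData M bar coc` asserts that for every `m ∈ Δ_M` and `γ ∈ SL(2,ℤ)` we have
`m γ = I_m(γ) · overline{m γ}` with `overline{m γ} = bar m γ ∈ Δ_M` and
`I_m(γ) = coc m γ ∈ SL(2,ℤ)`. -/
def HeckeData (M : ℕ) (bar : Delta M → SL(2, ℤ) → Delta M)
    (coc : Delta M → SL(2, ℤ) → SL(2, ℤ)) : Prop :=
  ∀ (m : Delta M) (γ : SL(2, ℤ)),
    ((coc m γ : SL(2, ℤ)) : GL2ℤ) * (bar m γ).1 = m.1 * (γ : GL2ℤ)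

/-- The representation `T_M ρ` on `V(ρ) ⊗ ℂ[Δ_M]` (coordinates `ι × Δ_M`):
`(T_M ρ)(γ) (v ⊗ 𝔢_m) = ρ(I_m(γ⁻¹)⁻¹) v ⊗ 𝔢_{m·γ⁻¹}`. -/
def heckeRep {ι : Type*} (M : ℕ) (ρ : SL(2, ℤ) → Matrix ι ι ℂ)
    (bar : Delta M → SL(2, ℤ) → Delta M) (coc : Delta M → SL(2, ℤ) → SL(2, ℤ)) :
    SL(2, ℤ) → Matrix (ι × Delta M) (ι × Delta M) ℂ :=
  fun γ p q => if p.2 = bar q.2 γ⁻¹ then ρ ((coc q.2 γ⁻¹)⁻¹) p.1 q.1 else 0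

/-- Möbius action of an upper triangular integer matrix `(a b; 0 d)` (with
`(aτ+b)/d ∈ ℍ`, as is the case for `m ∈ Δ_M`) on `ℍ`. -/
def utAct (m : GL2ℤ) (τ : ℍ) : ℍ :=
  if h : 0 < ((((m 0 0 : ℤ) : ℂ) * (τ : ℂ) + ((m 0 1 : ℤ) : ℂ)) / ((m 1 1 : ℤ) : ℂ)).im
  then ⟨_, h⟩ else τ

/-- The slash `(f ∣_k m)(τ) = (a/d)^{k/2} f((aτ+b)/d)` for `m = (a b; 0 d)`. -/
def mslash {ι : Type*} (k : ℤ) (m : GL2ℤ) (f : ℍ → ι → ℂ) : ℍ → ι → ℂ :=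
  fun τ => (((((m 0 0 : ℤ) : ℝ) / ((m 1 1 : ℤ) : ℝ)) ^ ((k : ℝ) / 2) : ℝ) : ℂ) • f (utAct m τ)

/-- The vector-valued Hecke operator on forms:
`T_M f = ∑_{m ∈ Δ_M} (f ∣_k m) ⊗ 𝔢_m`. -/
def heckeT {ι : Type*} (M : ℕ) (k : ℤ) (f : ℍ → ι → ℂ) : ℍ → (ι × Delta M) → ℂ :=
  fun τ p => mslash k p.2.1 f τ p.1

/-- Tensor product of vector-valued functions, `(f ⊗ g)(τ) = f(τ) ⊗ g(τ)`. -/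
def tensorF {α β : Type*} (f : ℍ → α → ℂ) (g : ℍ → β → ℂ) : ℍ → α × β → ℂ :=
  fun τ p => f τ p.1 * g τ p.2

/-! ### Right cosets and induced representations -/

/-- The set of right cosets `Γ\SL(2,ℤ)`. -/
def Cos (Γ : Subgroup SL(2, ℤ)) : Type := Quotient (QuotientGroup.rightRel Γ)

/-- The coset `Γ γ`. -/
def mkCos (Γ : Subgroup SL(2, ℤ)) (γ : SL(2, ℤ)) : Cos Γ :=
  Quotient.mk (QuotientGroup.rightRel Γ) γ

/-- Right translation of right cosets: `Γγ ↦ Γγδ`. -/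
def cosMul (Γ : Subgroup SL(2, ℤ)) (c : Cos Γ) (δ : SL(2, ℤ)) : Cos Γ :=
  Quotient.map' (· * δ) (by
    intro a b h
    rw [QuotientGroup.rightRel_apply] at h ⊢
    simpa [mul_assoc] using h) c

/-- `IsSection Γ sec` says `sec` picks a representative in each right coset of `Γ`,
with the identity coset represented by `1` (i.e. `1 ∈ B`). -/
def IsSection (Γ : Subgroup SL(2, ℤ)) (sec : Cos Γ → SL(2, ℤ)) : Prop :=
  (∀ c, mkCos Γ (sec c) = c) ∧ sec (mkCos Γ 1) = 1

/-- The cocycle `I_β(δ) ∈ Γ` of the chosen system of representatives: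
`β δ = I_β(δ) · overline{β δ}`, extended to all of `SL(2,ℤ)` by `I_β = I_{overline β}`. -/
def indCoc (Γ : Subgroup SL(2, ℤ)) (sec : Cos Γ → SL(2, ℤ)) (c : Cos Γ)
    (δ : SL(2, ℤ)) : SL(2, ℤ) :=
  sec c * δ * (sec (cosMul Γ c δ))⁻¹

/-- The induced representation `Ind_Γ χ` on `ℂ[Γ\SL(2,ℤ)]`, for a character given as
a function `χf : SL(2,ℤ) → ℂ` (evaluated only on elements of `Γ`):
`(Ind_Γ χ)(γ) 𝔢_β = χ(I_β(γ⁻¹)⁻¹) 𝔢_{β·γ⁻¹}`. -/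
def indRep (Γ : Subgroup SL(2, ℤ)) (sec : Cos Γ → SL(2, ℤ)) (χf : SL(2, ℤ) → ℂ) :
    SL(2, ℤ) → Matrix (Cos Γ) (Cos Γ) ℂ :=
  fun γ c c' => if c = cosMul Γ c' γ⁻¹ then χf ((indCoc Γ sec c' γ⁻¹)⁻¹) else 0

/-- The induced representation `Ind_Γ 𝟙` (a permutation representation). -/
def permRep (Γ : Subgroup SL(2, ℤ)) : SL(2, ℤ) → Matrix (Cos Γ) (Cos Γ) ℂ :=
  fun γ c c' => if c = cosMul Γ c' γ⁻¹ then 1 else 0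

/-- The induction map on modular forms, `Ind f = ∑_γ (f ∣_k γ) 𝔢_γ`. -/
def indForm (Γ : Subgroup SL(2, ℤ)) (sec : Cos Γ → SL(2, ℤ)) (k : ℤ) (f : ℍ → ℂ) :
    ℍ → Cos Γ → ℂ :=
  fun τ c => cslash k (sec c) f τ

/-- The pointwise pairing `⟨f, v⟩ : τ ↦ ⟨f(τ), v⟩` with respect to the scalar
product making the standard basis orthonormal. -/
def pairF {α : Type*} [Fintype α] (f : ℍ → α → ℂ) (v : α → ℂ) : ℍ → ℂ :=
  fun τ => ∑ a, f τ a * conj (v a)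

/-! ### Eisenstein series -/

/-- The matrix `T = (1 1; 0 1)`. -/
def Tmat : SL(2, ℤ) := ⟨!![1, 1; 0, 1], by norm_num [Matrix.det_fin_two_of]⟩

/-- The relation whose classes are the right cosets `Γ_∞(v) γ` of
`Γ_∞(v) = {γ ∈ Γ_∞ : ρ(γ) v = v}`. -/
def eisRel {ι : Type*} [Fintype ι] (ρ : SL(2, ℤ) → Matrix ι ι ℂ) (v : ι → ℂ)
    (a b : SL(2, ℤ)) : Prop :=
  ((b * a⁻¹ : SL(2, ℤ)) 1 0 : ℤ) = 0 ∧ (ρ (b * a⁻¹)).mulVec v = v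

/-- The index `[Γ_∞ : Γ_∞(v)]`. -/
def eisIndex {ι : Type*} [Fintype ι] (ρ : SL(2, ℤ) → Matrix ι ι ℂ) (v : ι → ℂ) : ℕ :=
  Nat.card (Quotient (Relation.EqvGen.setoid
    (fun a b : {g : SL(2, ℤ) // (g 1 0 : ℤ) = 0} => eisRel ρ v a.1 b.1)))

/-- The Eisenstein series
`E_{k,v} = [Γ_∞ : Γ_∞(v)]⁻¹ ∑_{γ ∈ Γ_∞(v)\SL(2,ℤ)} v ∣_{k,ρ} γ` (for `k > 2`). -/
def eisSeries {ι : Type*} [Fintype ι] (k : ℤ) (ρ : SL(2, ℤ) → Matrix ι ι ℂ)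
    (v : ι → ℂ) : ℍ → ι → ℂ :=
  fun τ => ((eisIndex ρ v : ℂ))⁻¹ •
    ∑' c : Quotient (Relation.EqvGen.setoid (eisRel ρ v)),
      vslash k ρ (Quotient.out c) (fun _ => v) τ

/-- The Eisenstein series defined via the Hecke trick,
`E_{k,v} = [Γ_∞ : Γ_∞(v)]⁻¹ lim_{s→0} ∑_{γ ∈ Γ_∞(v)\SL(2,ℤ)} y^s v ∣_{k,ρ} γ`. -/
def eisSeriesH {ι : Type*} [Fintype ι] (k : ℤ) (ρ : SL(2, ℤ) → Matrix ι ι ℂ)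
    (v : ι → ℂ) : ℍ → ι → ℂ :=
  fun τ => limUnder (nhdsWithin (0 : ℝ) (Set.Ioi 0)) (fun s : ℝ =>
    ((eisIndex ρ v : ℂ))⁻¹ •
      ∑' c : Quotient (Relation.EqvGen.setoid (eisRel ρ v)),
        ((((Quotient.out c • τ : ℍ).im) ^ s : ℝ) : ℂ) •
          vslash k ρ (Quotient.out c) (fun _ => v) τ)

/-- The Eisenstein space `E_k(ρ) = span{E_{k,v} : v ∈ V(ρ)}` (for `k > 2`). -/
def Ek {ι : Type*} [Fintype ι] (k : ℤ) (ρ : SL(2, ℤ) → Matrix ι ι ℂ) :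
    Submodule ℂ (ℍ → ι → ℂ) :=
  Submodule.span ℂ {f | ∃ v : ι → ℂ, f = eisSeries k ρ v}

/-- The submodule of `SL(2,ℤ)`-invariant vectors (the isotrivial component `ρ(𝟙)`). -/
def invariants {ι : Type*} [Fintype ι] (ρ : SL(2, ℤ) → Matrix ι ι ℂ) :
    Submodule ℂ (ι → ℂ) where
  carrier := {v | ∀ γ, (ρ γ).mulVec v = v}
  add_mem' := by
    intro a b ha hb γ
    rw [Matrix.mulVec_add, ha, hb]
  zero_mem' := by
    intro γ
    simp [Matrix.mulVec_zero]
  smul_mem' := by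
    intro c a ha γ
    rw [Matrix.mulVec_smul, ha]

/-- The subspace `V(ρ)(1)_T = {v : ρ(T) v = v}` of `T`-fixed vectors. -/
def fixedT {ι : Type*} [Fintype ι] (ρ : SL(2, ℤ) → Matrix ι ι ℂ) :
    Submodule ℂ (ι → ℂ) where
  carrier := {v | (ρ Tmat).mulVec v = v}
  add_mem' := by
    intro a b ha hb
    show (ρ Tmat).mulVec _ = _
    rw [Matrix.mulVec_add, ha, hb]
  zero_mem' := by
    show (ρ Tmat).mulVec _ = _
    simp [Matrix.mulVec_zero]
  smul_mem' := by
    intro c a ha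
    show (ρ Tmat).mulVec _ = _
    rw [Matrix.mulVec_smul, ha]

/-! ### The hyperbolic measure and Petersson scalar products -/

instance : MeasurableSpace ℍ := borel ℍ

/-- The measure `dx dy` on `ℍ` (hyperbolic weights are carried by the integrands). -/
def μH : Measure ℍ := (MeasureTheory.volume : Measure ℂ).comap (fun τ : ℍ => (τ : ℂ))

/-- The standard (closed) fundamental domain of `SL(2,ℤ)\ℍ`. -/
def fdSL : Set ℍ := ModularGroup.fd

/-- The Petersson scalar product `⟨f, g⟩_ι` of vector-valued forms `f` of type `ρ` and
`g` of type `σ`, with respect to the embedding `ι : 𝟙 ↪ ρ ⊗ σ̄` with `ι(1) = u`: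
`∫_{SL(2,ℤ)\ℍ} ⟨(f ⊗ ḡ)(τ), ι(1)⟩ y^{k-2} dx dy`. -/
def petersson {α β : Type*} [Fintype α] [Fintype β] (k : ℤ) (u : α × β → ℂ)
    (f : ℍ → α → ℂ) (g : ℍ → β → ℂ) : ℂ :=
  ∫ τ in fdSL, (∑ a, ∑ b, f τ a * conj (g τ b) * conj (u (a, b))) *
    ((τ.im : ℂ)) ^ (k - 2) ∂μH

/-- The regularized Petersson scalar product (regularized as the limit of integrals
over truncations of the fundamental domain). -/
def peterssonReg {α β : Type*} [Fintype α] [Fintype β] (k : ℤ) (u : α × β → ℂ)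
    (f : ℍ → α → ℂ) (g : ℍ → β → ℂ) : ℂ :=
  limUnder Filter.atTop (fun t : ℝ =>
    ∫ τ in {τ ∈ fdSL | τ.im ≤ t}, (∑ a, ∑ b, f τ a * conj (g τ b) * conj (u (a, b))) *
      ((τ.im : ℂ)) ^ (k - 2) ∂μH)

/-- The canonical `ι(1) = ∑_w w ⊗ w̄` for forms of the same type. -/
def diagPair (α : Type*) : α × α → ℂ := fun p => if p.1 = p.2 then 1 else 0

/-- A fundamental domain for `Γ\ℍ` obtained from coset representatives. -/
def fdGamma (Γ : Subgroup SL(2, ℤ)) (sec : Cos Γ → SL(2, ℤ)) : Set ℍ :=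
  ⋃ c : Cos Γ, (fun τ => sec c • τ) '' fdSL

/-- The normalized Petersson scalar product of two classical modular forms for `Γ`:
`[SL(2,ℤ):Γ]⁻¹ ∫_{Γ\ℍ} f(τ) conj(g(τ)) y^{k-2} dx dy`. -/
def peterssonGamma (k : ℤ) (Γ : Subgroup SL(2, ℤ)) (sec : Cos Γ → SL(2, ℤ))
    (f g : ℍ → ℂ) : ℂ :=
  ((Γ.index : ℂ))⁻¹ *
    ∫ τ in fdGamma Γ sec, f τ * conj (g τ) * ((τ.im : ℂ)) ^ (k - 2) ∂μH

/-! ### Kernels, finite index, instances -/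

/-- The kernel of a representation. -/
def repKer {ι : Type*} [Fintype ι] (ρ : SL(2, ℤ) → Matrix ι ι ℂ) (hρ : IsRep ρ) :
    Subgroup SL(2, ℤ) where
  carrier := {γ | ρ γ = 1}
  one_mem' := hρ.1
  mul_mem' := by
    intro a b ha hb
    show ρ (_ * _) = 1
    rw [hρ.2, ha, hb, one_mul]
  inv_mem' := by
    intro a ha
    show ρ _⁻¹ = 1
    have h2 := hρ.2 a⁻¹ a
    rw [inv_mul_cancel, hρ.1, ha, mul_one] at h2
    exact h2.symm

instance (Γ : Subgroup SL(2, ℤ)) [Γ.FiniteIndex] : Finite (Cos Γ) :=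
  Finite.of_equiv _ (QuotientGroup.quotientRightRelEquivQuotientLeftRel Γ).symm

instance (Γ : Subgroup SL(2, ℤ)) [Γ.FiniteIndex] : Fintype (Cos Γ) := Fintype.ofFinite _

instance (N : ℕ) [NeZero N] : (CongruenceSubgroup.Gamma N).FiniteIndex := by
  haveI : Finite (Matrix.SpecialLinearGroup (Fin 2) (ZMod N)) := Subtype.finite
  have : (CongruenceSubgroup.Gamma N) = (Matrix.SpecialLinearGroup.map (Int.castRingHom (ZMod N))).ker := rfl
  rw [this]
  infer_instance

instance (N : ℕ) [NeZero N] : (Gamma0 N).FiniteIndex := by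
  refine Subgroup.finiteIndex_of_le (H := CongruenceSubgroup.Gamma N) ?_
  intro γ hγ
  rw [Gamma_mem] at hγ
  rw [Gamma0_mem]
  exact hγ.2.2.1

instance (N : ℕ) [NeZero N] : (Gamma1 N).FiniteIndex := by
  refine Subgroup.finiteIndex_of_le (H := CongruenceSubgroup.Gamma N) ?_
  intro γ hγ
  rw [Gamma_mem] at hγ
  rw [Gamma1_mem]
  exact ⟨hγ.1, hγ.2.2.2, hγ.2.2.1⟩

/-- A sesquilinear scalar product on `ι → ℂ` with Gram matrix `B`:
`⟨v, w⟩_B = ∑_{i,j} conj(w i) B i j v j`. -/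
def sesq {ι : Type*} [Fintype ι] (B : Matrix ι ι ℂ) (v w : ι → ℂ) : ℂ :=
  ∑ i, ∑ j, conj (w i) * B i j * v j

/-- The scalar product `⟨v ⊗ 𝔢_m, w ⊗ 𝔢_{m'}⟩ = δ_{m,m'} ⟨v,w⟩_B` on `V(ρ) ⊗ ℂ[Δ_M]`. -/
def blockDiagGram {ι : Type*} (M : ℕ) (B : Matrix ι ι ℂ) :
    Matrix (ι × Delta M) (ι × Delta M) ℂ :=
  Matrix.of fun p q => if p.2 = q.2 then B p.1 q.1 else 0

/-- The inclusion `𝟙 → T_M 𝟙`, `c ↦ c ∑_{m ∈ Δ_M} 𝔢_m`. -/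
def oneIncl (M : ℕ) : Matrix (Unit × Delta M) Unit ℂ :=
  Matrix.of fun _ _ => 1

/-- `T_M φ` for a homomorphism (intertwining matrix) `φ : ρ → σ`:
`v ⊗ 𝔢_m ↦ φ(v) ⊗ 𝔢_m`. -/
def heckeHom {ι κ : Type*} (M : ℕ) (φ : Matrix κ ι ℂ) :
    Matrix (κ × Delta M) (ι × Delta M) ℂ :=
  fun p q => if p.2 = q.2 then φ p.1 q.1 else 0

/-- The surjection `(T_M ρ) ⊗ (T_M σ) → T_M (ρ ⊗ σ)`:
`(v ⊗ 𝔢_m) ⊗ (w ⊗ 𝔢_{m'}) ↦ δ_{m,m'} (v ⊗ w) ⊗ 𝔢_m`. -/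
def heckeTenProj (ι κ : Type*) (M : ℕ) :
    Matrix ((ι × κ) × Delta M) ((ι × Delta M) × (κ × Delta M)) ℂ :=
  fun p q => if p.1.1 = q.1.1 ∧ p.1.2 = q.2.1 ∧ p.2 = q.1.2 ∧ q.1.2 = q.2.2 then 1 else 0

/-! ### Classical operators, special matrices, and intertwining inclusions -/

set_option linter.unnecessarySeqFocus false

/-- The scalar slash `(f ∣_k m)(τ) = (a/d)^{k/2} f((aτ+b)/d)` for `m = (a b; 0 d)`. -/
def cmslash (k : ℤ) (m : GL2ℤ) (f : ℍ → ℂ) : ℍ → ℂ :=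
  fun τ => (((((m 0 0 : ℤ) : ℝ) / ((m 1 1 : ℤ) : ℝ)) ^ ((k : ℝ) / 2) : ℝ) : ℂ) *
    f (utAct m τ)

/-- `𝔢_γ`, the standard basis vector of `ℂ[Γ\SL(2,ℤ)]` at the coset `Γγ`. -/
def eCos (Γ : Subgroup SL(2, ℤ)) (γ : SL(2, ℤ)) : Cos Γ → ℂ :=
  fun c => if c = mkCos Γ γ then 1 else 0

/-- The matrix `m_M = diag(M, 1) ∈ Δ_M`. -/
def mMat (M : ℕ) (hM : 0 < M) : Delta M :=
  ⟨!![(M : ℤ), 0; 0, 1], by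
    refine ⟨?_, ?_, ?_, ?_, ?_⟩ <;> simp <;> omega⟩

/-- The matrix `m'_M = diag(1, M) ∈ Δ_M`. -/
def mMat' (M : ℕ) (hM : 0 < M) : Delta M :=
  ⟨!![1, 0; 0, (M : ℤ)], by
    refine ⟨?_, ?_, ?_, ?_, ?_⟩ <;> simp <;> omega⟩

/-- The matrix `m_{M,b} = (M b; 0 M) ∈ Δ_{M²}` for `0 ≤ b < M`. -/
def mMatB (M : ℕ) (b : Fin M) : Delta (M * M) :=
  ⟨!![(M : ℤ), (b : ℤ); 0, (M : ℤ)], by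
    have hb := b.2
    refine ⟨?_, ?_, ?_, ?_, ?_⟩ <;> simp <;> omega⟩

/-- The matrix `diag(M, M) ∈ Δ_{M²}`. -/
def mMatMM (M : ℕ) (hM : 0 < M) : Delta (M * M) :=
  ⟨!![(M : ℤ), 0; 0, (M : ℤ)], by
    refine ⟨?_, ?_, ?_, ?_, ?_⟩ <;> simp <;> omega⟩

/-- Rescaling `({\rm sc}_M f)(τ) = f(M τ)`. -/
def scMul (M : ℕ) (f : ℍ → ℂ) : ℍ → ℂ := fun τ => f (utAct !![(M : ℤ), 0; 0, 1] τ)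

/-- Rescaling `({\rm sc}_{1/M} f)(τ) = f(τ / M)`. -/
def scDiv (M : ℕ) (f : ℍ → ℂ) : ℍ → ℂ := fun τ => f (utAct !![1, 0; 0, (M : ℤ)] τ)

/-- The classical Hecke operator
`(f ∣_{k,χ} T_M)(τ) = M^{k-1} ∑_{d ∣ M, 0 ≤ b < d} d^{-k} conj(χ(d)) f((M d⁻¹ τ + b)/d)`. -/
def classicalHecke {N : ℕ} (M : ℕ) (k : ℤ) (χ : DirichletCharacter ℂ N)
    (f : ℍ → ℂ) : ℍ → ℂ :=
  fun τ => (M : ℂ) ^ (k - 1) *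
    ∑ d ∈ M.divisors, ∑ b ∈ Finset.range d,
      ((d : ℂ)) ^ (-k) * conj (χ ((d : ℕ) : ZMod N)) *
        f (utAct !![((M / d : ℕ) : ℤ), (b : ℤ); 0, ((d : ℕ) : ℤ)] τ)

/-- `e_M(x) = exp(2πi x/M)`. -/
def eM (M : ℕ) (x : ℤ) : ℂ := Complex.exp (2 * Real.pi * Complex.I * x / M)

/-- The Gauss sum `G(ε, e_M(b)) = ∑_{a mod M} ε(a) e_M(a b)`. -/
def gaussSumE {M : ℕ} (ε : DirichletCharacter ℂ M) (b : ℤ) : ℂ :=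
  ∑ a ∈ Finset.range M, ε ((a : ℕ) : ZMod M) * eM M ((a : ℤ) * b)

/-- The value `χ(I_{I₂}(δ))` of a Dirichlet character mod `N` on the cocycle
`I_{I₂}(δ) ∈ Γ₀(N)`. -/
def cocVal {N : ℕ} (χ : DirichletCharacter ℂ N) (sec : Cos (Gamma0 N) → SL(2, ℤ))
    (δ : SL(2, ℤ)) : ℂ :=
  dirSL χ (indCoc (Gamma0 N) sec (mkCos (Gamma0 N) 1) δ)

/-- The inclusion `ι_Hecke : ρ_χ → T_M ρ_χ`,
`𝔢_γ ↦ M^{k/2-1} ∑_{m ∈ Δ_M} χ(m) conj(χ(I_{I₂}(I_m(γ)))) 𝔢_{I_m(γ)} ⊗ 𝔢_{m·γ}`. -/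
def iotaHecke {N : ℕ} (M : ℕ) (k : ℤ) (χ : DirichletCharacter ℂ N)
    (sec : Cos (Gamma0 N) → SL(2, ℤ))
    (bar : Delta M → SL(2, ℤ) → Delta M) (coc : Delta M → SL(2, ℤ) → SL(2, ℤ)) :
    Matrix (Cos (Gamma0 N) × Delta M) (Cos (Gamma0 N)) ℂ :=
  Matrix.of fun p c =>
    ((((M : ℝ) ^ ((k : ℝ) / 2 - 1) : ℝ)) : ℂ) *
      ∑ m : Delta M,
        if p.2 = bar m (sec c) ∧ p.1 = mkCos (Gamma0 N) (coc m (sec c)) then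
          χ ((m.1 1 1 : ℤ) : ZMod N) * conj (cocVal χ sec (coc m (sec c)))
        else 0

/-- The inclusion `ι_AL : ρ_{χ'} → T_M ρ_χ`,
`𝔢_γ ↦ conj(χ(I_{I₂}(γ_{M,N} I_{m_M}(γ)))) 𝔢_{γ_{M,N} I_{m_M}(γ)} ⊗ 𝔢_{m_M·γ}`. -/
def iotaAL {N : ℕ} (M : ℕ) (hM : 0 < M) (χ : DirichletCharacter ℂ N)
    (sec : Cos (Gamma0 N) → SL(2, ℤ)) (γMN : SL(2, ℤ))
    (bar : Delta M → SL(2, ℤ) → Delta M) (coc : Delta M → SL(2, ℤ) → SL(2, ℤ)) :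
    Matrix (Cos (Gamma0 N) × Delta M) (Cos (Gamma0 N)) ℂ :=
  Matrix.of fun p c =>
    if p.2 = bar (mMat M hM) (sec c) ∧
        p.1 = mkCos (Gamma0 N) (γMN * coc (mMat M hM) (sec c)) then
      conj (cocVal χ sec (γMN * coc (mMat M hM) (sec c)))
    else 0

/-- The inclusion `ι_old : ρ_{χ_M} → T_M ρ_χ`,
`𝔢_γ ↦ M^{-k/2} conj(χ(I_{I₂}(I_{m_M}(γ)))) 𝔢_{I_{m_M}(γ)} ⊗ 𝔢_{m_M·γ}`. -/
def iotaOld {N : ℕ} (M : ℕ) (hM : 0 < M) (k : ℤ) (χ : DirichletCharacter ℂ N)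
    (sec : Cos (Gamma0 N) → SL(2, ℤ)) (secMN : Cos (Gamma0 (M * N)) → SL(2, ℤ))
    (bar : Delta M → SL(2, ℤ) → Delta M) (coc : Delta M → SL(2, ℤ) → SL(2, ℤ)) :
    Matrix (Cos (Gamma0 N) × Delta M) (Cos (Gamma0 (M * N))) ℂ :=
  Matrix.of fun p c =>
    if p.2 = bar (mMat M hM) (secMN c) ∧
        p.1 = mkCos (Gamma0 N) (coc (mMat M hM) (secMN c)) then
      ((((M : ℝ) ^ (-((k : ℝ) / 2)) : ℝ)) : ℂ) *
        conj (cocVal χ sec (coc (mMat M hM) (secMN c)))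
    else 0

/-- The subgroup `Γ₁(N², N) = {γ : c(γ) ≡ 0 mod N², a(γ) ≡ d(γ) ≡ 1 mod N}`. -/
def Gamma1Sq (N : ℕ) : Subgroup SL(2, ℤ) := Gamma0 (N * N) ⊓ Gamma1 N

instance (N : ℕ) [NeZero N] : (Gamma1Sq N).FiniteIndex := by
  unfold Gamma1Sq
  infer_instance

/-- The inclusion `ι_{Γ(N)} : ρ_{Γ(N)} → T_N ρ_{Γ₁(N²,N)}`,
`𝔢_γ ↦ N^{k/2} 𝔢_{I_{m'_N}(γ)} ⊗ 𝔢_{m'_N·γ}`. -/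
def iotaGammaN (N : ℕ) (hN : 0 < N) (k : ℤ)
    (secG : Cos (CongruenceSubgroup.Gamma N) → SL(2, ℤ))
    (bar : Delta N → SL(2, ℤ) → Delta N) (coc : Delta N → SL(2, ℤ) → SL(2, ℤ)) :
    Matrix (Cos (Gamma1Sq N) × Delta N) (Cos (CongruenceSubgroup.Gamma N)) ℂ :=
  Matrix.of fun p c =>
    if p.2 = bar (mMat' N hN) (secG c) ∧
        p.1 = mkCos (Gamma1Sq N) (coc (mMat' N hN) (secG c)) then
      ((((N : ℝ) ^ ((k : ℝ) / 2) : ℝ)) : ℂ)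
    else 0

/-- The inclusion `ι_twist : ρ_{χ'} → T_{M²} ρ_χ`,
`𝔢_γ ↦ M⁻¹ ∑_{b mod M} G(ε, e_M(-b)) conj(χ(I_{I₂}(I_{m_{M,b}}(γ))))
𝔢_{I_{m_{M,b}}(γ)} ⊗ 𝔢_{m_{M,b}·γ}`. -/
def iotaTwist {N : ℕ} (M : ℕ) (χ : DirichletCharacter ℂ N)
    (ε : DirichletCharacter ℂ M)
    (sec : Cos (Gamma0 N) → SL(2, ℤ)) (sec' : Cos (Gamma0 (N * (M * M))) → SL(2, ℤ))
    (bar : Delta (M * M) → SL(2, ℤ) → Delta (M * M))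
    (coc : Delta (M * M) → SL(2, ℤ) → SL(2, ℤ)) :
    Matrix (Cos (Gamma0 N) × Delta (M * M)) (Cos (Gamma0 (N * (M * M)))) ℂ :=
  Matrix.of fun p c =>
    ((M : ℂ))⁻¹ *
      ∑ b : Fin M,
        if p.2 = bar (mMatB M b) (sec' c) ∧
            p.1 = mkCos (Gamma0 N) (coc (mMatB M b) (sec' c)) then
          gaussSumE ε (-(b : ℤ)) * conj (cocVal χ sec (coc (mMatB M b) (sec' c)))
        else 0

/-- The inclusion `ι_id : ρ_χ → T_{M²} ρ_χ`, `𝔢_γ ↦ 𝔢_γ ⊗ 𝔢_{diag(M,M)}`. -/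
def iotaId {N : ℕ} (M : ℕ) (hM : 0 < M) :
    Matrix (Cos (Gamma0 N) × Delta (M * M)) (Cos (Gamma0 N)) ℂ :=
  Matrix.of fun p c => if p.1 = c ∧ p.2 = mMatMM M hM then 1 else 0

end VVMF

/-! The projection `π` keeps the diagonal `m = m'` of `ℂ[Δ_M] ⊗ ℂ[Δ_M]`. Off the diagonal the
matrix coefficients of `T_M ρ ⊗ T_M σ` that `π` sees vanish, because `m ↦ m·γ` is injective on
`Δ_M` (two elements of `Δ_M` in the same `SL₂(ℤ)`-orbit coincide); on the diagonal they are those of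
`T_M(ρ ⊗ σ)`. So `π` intertwines the two representations, and postcomposition with an intertwiner
preserves modular forms. The identity `π ∘ (T_M f ⊗ T_M g) = T_M(f ⊗ g)` is the multiplicativity
`(a/d)^{(k+l)/2} = (a/d)^{k/2} (a/d)^{l/2}` for `a, d > 0`. -/

namespace VVMF

variable {ι κ : Type*} [Fintype ι] [Fintype κ]

theorem IsVModForm.mulVec {ι' : Type*} [Fintype ι'] {k : ℤ} {ρ : SL(2, ℤ) → Matrix ι ι ℂ}
    {ρ' : SL(2, ℤ) → Matrix ι' ι' ℂ} {A : Matrix ι ι' ℂ} (hA : ∀ γ, ρ γ * A = A * ρ' γ)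
    {F : ℍ → ι' → ℂ} (hF : IsVModForm k ρ' F) : IsVModForm k ρ (fun τ => A *ᵥ F τ) := by
  obtain ⟨hdiff, hslash, hbdd⟩ := hF
  have hcomp : ∀ i, (fun τ => (A *ᵥ F τ) i) = ∑ j, A i j • fun τ => F τ j := fun i => by
    funext τ
    simp [Matrix.mulVec, dotProduct, Finset.sum_apply]
  refine ⟨fun i => ?_, fun γ => ?_, fun i => ?_⟩
  · rw [hcomp]
    exact Finset.sum_induction _ (MDifferentiable 𝓘(ℂ) 𝓘(ℂ)) (fun _ _ => .add)
      mdifferentiable_const fun j _ => (hdiff j).const_smul (A i j)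
  · funext τ
    calc vslash k ρ γ (fun τ => A *ᵥ F τ) τ = A *ᵥ vslash k ρ' γ F τ := by
          simp only [vslash, Matrix.mulVec_mulVec, hA, Matrix.mulVec_smul]
      _ = A *ᵥ F τ := by rw [hslash]
  · rw [hcomp]
    exact (boundedFilterSubmodule ℂ atImInfty).sum_mem fun j _ => Submodule.smul_mem _ _ (hbdd j)

section Delta

variable {M : ℕ}

theorem Delta.a_pos (m : Delta M) : 0 < m.1 0 0 := m.2.2.1

theorem Delta.d_pos (m : Delta M) : 0 < m.1 1 1 := m.2.2.2.2.1.trans_lt m.2.2.2.2.2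

theorem Delta.eq_of_val_eq_mul {m m' : Delta M} (S : SL(2, ℤ)) (h : m'.1 = (S : GL2ℤ) * m.1) :
    m' = m := by
  obtain ⟨hc, ha, -, hb, hbd⟩ := m.2
  obtain ⟨hc', ha', -, hb', hbd'⟩ := m'.2
  have hdet := S.2
  rw [Matrix.det_fin_two] at hdet
  have e : ∀ i j, m'.1 i j = ∑ x, (S : GL2ℤ) i x * m.1 x j := fun i j => by rw [h, Matrix.mul_apply]
  have e00 := e 0 0
  have e01 := e 0 1
  have e10 := e 1 0
  have e11 := e 1 1
  simp only [Fin.sum_univ_two, hc, hc', mul_zero, add_zero] at e00 e01 e10 e11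
  have hr : (S : GL2ℤ) 1 0 = 0 := (mul_eq_zero.1 e10.symm).resolve_right ha.ne'
  rw [hr, mul_zero, sub_zero] at hdet
  have hp : (S : GL2ℤ) 0 0 = 1 := Int.eq_one_of_mul_eq_one_right (by nlinarith) hdet
  have hs : (S : GL2ℤ) 1 1 = 1 := by rwa [hp, one_mul] at hdet
  rw [hp, one_mul] at e00 e01
  rw [hr, hs, zero_mul, zero_add, one_mul] at e11
  -- now `S = (1 q; 0 1)` and `b' = b + q d`, with `0 ≤ b, b' < d`
  have hq : (S : GL2ℤ) 0 1 = 0 := by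
    rcases lt_trichotomy ((S : GL2ℤ) 0 1) 0 with hq | hq | hq <;> [nlinarith; exact hq; nlinarith]
  apply Subtype.ext
  ext i j
  fin_cases i <;> fin_cases j <;> simp [e00, e01, e11, hq, hc, hc']

theorem HeckeData.bar_injective {bar : Delta M → SL(2, ℤ) → Delta M}
    {coc : Delta M → SL(2, ℤ) → SL(2, ℤ)} (hd : HeckeData M bar coc) (γ : SL(2, ℤ)) :
    Function.Injective (bar · γ) := by
  intro m m' (h : bar m γ = bar m' γ)
  have hγ : IsUnit (γ : GL2ℤ) := (Matrix.isUnit_iff_isUnit_det _).2 (by rw [γ.2]; exact isUnit_one)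
  refine (Delta.eq_of_val_eq_mul (coc m' γ * (coc m γ)⁻¹) (hγ.mul_left_injective ?_)).symm
  calc m'.1 * γ = coc m' γ * (bar m' γ).1 := (hd m' γ).symm
    _ = ((coc m' γ * (coc m γ)⁻¹ * coc m γ : SL(2, ℤ)) : GL2ℤ) * (bar m γ).1 := by
          rw [inv_mul_cancel_right, ← h]
    _ = ((coc m' γ * (coc m γ)⁻¹ : SL(2, ℤ)) : GL2ℤ) * m.1 * γ := by
          rw [Matrix.SpecialLinearGroup.coe_mul, mul_assoc, hd, mul_assoc]

end Delta

section HeckeTensor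

variable {M : ℕ}

theorem heckeTenProj_mulVec_apply (v : (ι × Delta M) × (κ × Delta M) → ℂ) (i : ι) (j : κ)
    (m : Delta M) : (heckeTenProj ι κ M *ᵥ v) ((i, j), m) = v ((i, m), (j, m)) := by
  rw [Matrix.mulVec, dotProduct, Fintype.sum_eq_single ((i, m), (j, m))]
  · simp [heckeTenProj]
  · rintro ⟨⟨i', m'⟩, j', m''⟩ hne
    simp only [heckeTenProj, ite_mul, one_mul, zero_mul, ite_eq_right_iff]
    rintro ⟨rfl, rfl, rfl, rfl⟩
    exact absurd rfl hne

theorem heckeTenProj_mul_apply {α : Type*} (B : Matrix ((ι × Delta M) × (κ × Delta M)) α ℂ)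
    (i : ι) (j : κ) (m : Delta M) (a : α) :
    (heckeTenProj ι κ M * B) ((i, j), m) a = B ((i, m), (j, m)) a :=
  heckeTenProj_mulVec_apply (fun r => B r a) i j m

theorem mul_heckeTenProj_apply {α : Type*} [Fintype α] (A : Matrix α ((ι × κ) × Delta M) ℂ)
    (a : α) (i : ι) (j : κ) (m m' : Delta M) :
    (A * heckeTenProj ι κ M) a ((i, m), (j, m')) = if m = m' then A a ((i, j), m) else 0 := by
  rw [Matrix.mul_apply, Fintype.sum_eq_single ((i, j), m)]
  · simp [heckeTenProj]
  · rintro ⟨⟨i', j'⟩, m''⟩ hne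
    simp only [heckeTenProj, mul_ite, mul_one, mul_zero, ite_eq_right_iff]
    rintro ⟨rfl, rfl, rfl, -⟩
    exact absurd rfl hne

theorem heckeRep_kronecker_mul_heckeTenProj {bar : Delta M → SL(2, ℤ) → Delta M}
    {coc : Delta M → SL(2, ℤ) → SL(2, ℤ)} (hd : HeckeData M bar coc)
    (ρ : SL(2, ℤ) → Matrix ι ι ℂ) (σ : SL(2, ℤ) → Matrix κ κ ℂ) (γ : SL(2, ℤ)) :
    heckeRep M (fun γ => ρ γ ⊗ₖ σ γ) bar coc γ * heckeTenProj ι κ M =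
      heckeTenProj ι κ M * (heckeRep M ρ bar coc γ ⊗ₖ heckeRep M σ bar coc γ) := by
  ext ⟨⟨i, j⟩, m⟩ ⟨⟨i', m'⟩, j', m''⟩
  rw [mul_heckeTenProj_apply, heckeTenProj_mul_apply]
  simp only [heckeRep, Matrix.kroneckerMap_apply]
  by_cases hm : m' = m''
  · subst hm
    split_ifs <;> simp_all
  · have hbar : m = bar m' γ⁻¹ → m ≠ bar m'' γ⁻¹ := fun h₁ h₂ =>
      hm (hd.bar_injective γ⁻¹ (h₁.symm.trans h₂))
    split_ifs <;> simp_all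

theorem mslash_tensorF {α β : Type*} (k l : ℤ) {m : GL2ℤ} (ha : 0 < m 0 0) (hd : 0 < m 1 1)
    (f : ℍ → α → ℂ) (g : ℍ → β → ℂ) :
    mslash (k + l) m (tensorF f g) = tensorF (mslash k m f) (mslash l m g) := by
  funext τ p
  have hpos : (0 : ℝ) < (m 0 0 : ℝ) / (m 1 1 : ℝ) := by positivity
  have hexp : ((k + l : ℤ) : ℝ) / 2 = (k : ℝ) / 2 + (l : ℝ) / 2 := by push_cast; ring
  simp only [mslash, tensorF, Pi.smul_apply, smul_eq_mul, hexp, Real.rpow_add hpos,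
    Complex.ofReal_mul]
  ring

theorem heckeTenProj_mulVec_tensorF_heckeT (k l : ℤ) (f : ℍ → ι → ℂ) (g : ℍ → κ → ℂ) :
    (fun τ => heckeTenProj ι κ M *ᵥ tensorF (heckeT M k f) (heckeT M l g) τ) =
      heckeT M (k + l) (tensorF f g) := by
  funext τ ⟨⟨i, j⟩, m⟩
  rw [heckeTenProj_mulVec_apply]
  simp only [heckeT, mslash_tensorF k l m.a_pos m.d_pos]
  rfl

end HeckeTensor

end VVMF

open VVMF

theorem hecke_tensor_compatibility_general {ι κ : Type*} [Fintype ι] [Fintype κ]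
    (M : ℕ) (k l : ℤ)
    (ρ : SL(2, ℤ) → Matrix ι ι ℂ) (σ : SL(2, ℤ) → Matrix κ κ ℂ)
    (bar : Delta M → SL(2, ℤ) → Delta M) (coc : Delta M → SL(2, ℤ) → SL(2, ℤ))
    (hd : HeckeData M bar coc) :
    (∀ F : ℍ → (ι × Delta M) × (κ × Delta M) → ℂ,
      IsVModForm k (fun γ => heckeRep M ρ bar coc γ ⊗ₖ heckeRep M σ bar coc γ) F →
      IsVModForm k (heckeRep M (fun γ => ρ γ ⊗ₖ σ γ) bar coc)
        (fun τ => (heckeTenProj ι κ M).mulVec (F τ))) ∧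
    (∀ (f : ℍ → ι → ℂ) (g : ℍ → κ → ℂ), IsVModForm k ρ f → IsVModForm l σ g →
      (fun τ => (heckeTenProj ι κ M).mulVec (tensorF (heckeT M k f) (heckeT M l g) τ)) =
        heckeT M (k + l) (tensorF f g)) :=
  ⟨fun _ hF => hF.mulVec (heckeRep_kronecker_mul_heckeTenProj hd ρ σ),
    fun f g _ _ => heckeTenProj_mulVec_tensorF_heckeT k l f g⟩

/-- Postcomposition with `π_{M,ρ,σ} : (T_M ρ) ⊗ (T_M σ) → T_M (ρ ⊗ σ)`
maps `M_k(T_M ρ ⊗ T_M σ)` into `M_k(T_M (ρ ⊗ σ))`, and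
`π_{M,ρ,σ} ∘ ((T_M f) ⊗ (T_M g)) = T_M (f ⊗ g)` for `f ∈ M_k(ρ)`, `g ∈ M_l(σ)`. -/
theorem hecke_tensor_compatibility {ι κ : Type*} [Fintype ι] [Fintype κ]
    (M : ℕ) (hM : 0 < M) (k l : ℤ)
    (ρ : SL(2, ℤ) → Matrix ι ι ℂ) (σ : SL(2, ℤ) → Matrix κ κ ℂ)
    (hρ : IsRep ρ) (hσ : IsRep σ)
    (hfinρ : (repKer ρ hρ).FiniteIndex) (hfinσ : (repKer σ hσ).FiniteIndex)
    (bar : Delta M → SL(2, ℤ) → Delta M) (coc : Delta M → SL(2, ℤ) → SL(2, ℤ))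
    (hd : HeckeData M bar coc) :
    (∀ F : ℍ → (ι × Delta M) × (κ × Delta M) → ℂ,
      IsVModForm k (fun γ => heckeRep M ρ bar coc γ ⊗ₖ heckeRep M σ bar coc γ) F →
      IsVModForm k (heckeRep M (fun γ => ρ γ ⊗ₖ σ γ) bar coc)
        (fun τ => (heckeTenProj ι κ M).mulVec (F τ))) ∧
    (∀ (f : ℍ → ι → ℂ) (g : ℍ → κ → ℂ), IsVModForm k ρ f → IsVModForm l σ g →
      (fun τ => (heckeTenProj ι κ M).mulVec (tensorF (heckeT M k f) (heckeT M l g) τ)) =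
        heckeT M (k + l) (tensorF f g)) :=
  hecke_tensor_compatibility_general M k l ρ σ bar coc hd
end
end

section
/- For every positive integer M there is an isomorphism of SL₂(ℤ)-representations T_M 𝟙 ≅ ⊕_{a : a²|M} Ind_{Γ₀(M/a²)} 𝟙, where a runs over the positive integers whose square divides M. -/
open scoped MatrixGroups Manifold Kronecker ComplexConjugate Classical ComplexOrder
open Matrix UpperHalfPlane Complex Filter MeasureTheory CongruenceSubgroup

noncomputable section

/-!
`Δ_M` is a system of representatives for `SL₂(ℤ) \ {A ∈ M₂(ℤ) : det A = M}` (Hermite normal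
form), so `m · γ := overline(m γ)` is a right action of `SL₂(ℤ)` on `Δ_M`, and `T_M 𝟙` is its
permutation representation. Dividing `m` by the gcd `a` of its entries and applying the
Smith normal form of the primitive quotient puts `m` in the orbit of
`diag(M/a, a) = a · diag(M/a², 1)`, and `a` is an invariant of the orbit, since it divides
every entry of every element of it. For `N = M/a²` one has `δ · diag(N, 1) = diag(N, 1) · h`
with `δ ∈ SL₂(ℤ)` iff `N ∣ c(h)`, so the stabiliser of `diag(M/a, a)` is `Γ₀(M/a²)`. Hence
`Γ₀(M/a²) γ ↦ diag(M/a, a) · γ` is an equivariant bijection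
`⨿_a Γ₀(M/a²)\SL₂(ℤ) ≃ Δ_M`, and pulling functions back along it is the isomorphism.
-/

/-- The witness is `t = ∏ p`, over the primes `p ∣ n` with `p ∤ b`. -/
theorem Int.exists_isCoprime_add_mul {a b n : ℤ} (hn : n ≠ 0)
    (h : ∀ z : ℤ, Prime z → z ∣ a → z ∣ b → ¬ z ∣ n) :
    ∃ t : ℤ, IsCoprime (b + t * a) n := by
  classical
  set S : Finset ℕ := n.natAbs.primeFactors.filter fun p => ¬ (p : ℤ) ∣ b
  refine ⟨∏ p ∈ S, (p : ℤ), isCoprime_of_prime_dvd (fun h0 => hn h0.2) fun z hz hzb hzn => ?_⟩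
  have hzS : z ∣ ∏ p ∈ S, (p : ℤ) ↔ ¬ z ∣ b := by
    rw [hz.dvd_finsetProd_iff]
    constructor
    · rintro ⟨p, hpS, hzp⟩
      obtain ⟨hp, hpb⟩ := Finset.mem_filter.mp hpS
      have hzp' : z.natAbs = p :=
        (Nat.prime_dvd_prime_iff_eq (Int.prime_iff_natAbs_prime.mp hz)
          (Nat.prime_of_mem_primeFactors hp)).mp (Int.natAbs_dvd_natAbs.mpr hzp)
      rwa [← hzp', Int.natCast_natAbs, abs_dvd] at hpb
    · intro hzb'
      refine ⟨z.natAbs, Finset.mem_filter.mpr ⟨?_, ?_⟩, ?_⟩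
      · exact Nat.mem_primeFactors.mpr ⟨Int.prime_iff_natAbs_prime.mp hz,
          Int.natAbs_dvd_natAbs.mpr hzn, Int.natAbs_ne_zero.mpr hn⟩
      · rwa [Int.natCast_natAbs, abs_dvd]
      · rw [Int.natCast_natAbs]
        exact self_dvd_abs z
  by_cases hb : z ∣ b
  · rcases hz.dvd_or_dvd ((dvd_add_right hb).mp hzb) with ht | ha
    · exact hzS.mp ht hb
    · exact h z hz ha hb hzn
  · exact hb ((dvd_add_left ((hzS.mpr hb).mul_right a)).mp hzb)

lemma Matrix.SpecialLinearGroup.mul_coe_eq_iff {n R : Type*} [Fintype n] [DecidableEq n]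
    [CommRing R] {A B : Matrix n n R} (g : SpecialLinearGroup n R) :
    A * (g : Matrix n n R) = B ↔ A = B * ((g⁻¹ : SpecialLinearGroup n R) : Matrix n n R) := by
  constructor <;> rintro rfl <;>
    simp only [mul_assoc, ← coe_mul, mul_inv_cancel, inv_mul_cancel, coe_one, mul_one]

namespace VVMF

lemma Delta.eq_of_SL_mul {M : ℕ} {n₁ n₂ : Delta M} (δ : SL(2, ℤ))
    (h : (δ : GL2ℤ) * n₁.1 = n₂.1) : n₁ = n₂ := by
  obtain ⟨n₁, h10, h00, _, h01, h01'⟩ := n₁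
  obtain ⟨n₂, h10', h00', _, h01₂, h01₂'⟩ := n₂
  have hδ := δ.det_coe
  rw [Matrix.det_fin_two] at hδ
  have e : ∀ i j, ((δ : GL2ℤ) * n₁) i j = n₂ i j := fun i j => by rw [h]
  have e00 := e 0 0
  have e01 := e 0 1
  have e10 := e 1 0
  have e11 := e 1 1
  simp only [Matrix.mul_apply, Fin.sum_univ_two, h10, h10', mul_zero, add_zero] at e00 e01 e10 e11
  have hr : (δ : GL2ℤ) 1 0 = 0 := by
    rcases mul_eq_zero.mp e10 with h' | h'
    · exact h'
    · omega
  rw [hr, zero_mul, zero_add] at e11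
  rw [hr, mul_zero, sub_zero] at hδ
  have hp : (δ : GL2ℤ) 0 0 = 1 := Int.eq_one_of_mul_eq_one_right (by nlinarith) hδ
  rw [hp, one_mul] at e00 e01 hδ
  rw [hδ, one_mul] at e11
  have hq : (δ : GL2ℤ) 0 1 = 0 := by
    rcases lt_trichotomy ((δ : GL2ℤ) 0 1) 0 with h' | h' | h' <;> [skip; exact h'; skip] <;>
      nlinarith
  rw [hq, zero_mul, add_zero] at e01
  congr 1
  ext i j
  fin_cases i <;> fin_cases j
  exacts [e00, e01, h10.trans h10'.symm, e11]

lemma Delta.eq_of_SL_mul_eq {M : ℕ} {n₁ n₂ : Delta M} (δ₁ δ₂ : SL(2, ℤ))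
    (h : (δ₁ : GL2ℤ) * n₁.1 = δ₂ * n₂.1) : n₁ = n₂ :=
  Delta.eq_of_SL_mul (δ₂⁻¹ * δ₁) <| by
    rw [Matrix.SpecialLinearGroup.coe_mul, mul_assoc, h, ← mul_assoc,
      ← Matrix.SpecialLinearGroup.coe_mul, inv_mul_cancel, Matrix.SpecialLinearGroup.coe_one,
      one_mul]

abbrev SqDivisor (M : ℕ) : Type := {a : ℕ // 0 < a ∧ a * a ∣ M}

/-- `diag(M/a, a)`, written as `a • diag(M/a², 1)`. -/
def sqRep {M : ℕ} (hM : 0 < M) (a : SqDivisor M) : Delta M :=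
  ⟨(a.1 : ℤ) • !![((M / (a.1 * a.1) : ℕ) : ℤ), 0; 0, 1], by
    obtain ⟨a, ha, haM⟩ := a
    have hN : 0 < M / (a * a) := Nat.div_pos (Nat.le_of_dvd hM haM) (Nat.mul_pos ha ha)
    have hdet : M / (a * a) * (a * a) = M := Nat.div_mul_cancel haM
    generalize M / (a * a) = N at hN hdet
    refine ⟨by simp, by simp; positivity, ?_, by simp, by simp; omega⟩
    simp
    exact_mod_cast (by rw [← hdet]; ring : a * N * a = M)⟩

lemma exists_SL_mul_diag_iff (N : ℤ) (h : SL(2, ℤ)) :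
    (∃ δ : SL(2, ℤ), (δ : GL2ℤ) * !![N, 0; 0, 1] = !![N, 0; 0, 1] * h) ↔ N ∣ h 1 0 := by
  constructor
  · rintro ⟨δ, hδ⟩
    refine ⟨δ 1 0, ?_⟩
    have h10 := congrFun₂ hδ 1 0
    simp [Matrix.mul_apply] at h10
    linarith
  · rintro ⟨r, hr⟩
    have hdet := h.det_coe
    rw [Matrix.det_fin_two] at hdet
    refine ⟨⟨!![h 0 0, N * h 0 1; r, h 1 1], ?_⟩, ?_⟩
    · rw [Matrix.det_fin_two_of]
      linear_combination hdet + h 0 1 * hr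
    · ext i j
      fin_cases i <;> fin_cases j <;> simp [Matrix.mul_apply, hr] <;> ring

lemma exists_SL_mul_sqRep_iff {M : ℕ} (hM : 0 < M) (a : SqDivisor M) (h : SL(2, ℤ)) :
    (∃ δ : SL(2, ℤ), (δ : GL2ℤ) * (sqRep hM a).1 = (sqRep hM a).1 * h) ↔
      h ∈ Gamma0 (M / (a.1 * a.1)) := by
  have ha : (a.1 : ℤ) ≠ 0 := by exact_mod_cast a.2.1.ne'
  rw [Gamma0_mem, ZMod.intCast_zmod_eq_zero_iff_dvd, ← exists_SL_mul_diag_iff]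
  simp only [sqRep, Matrix.mul_smul, Matrix.smul_mul, (smul_right_injective GL2ℤ ha).eq_iff]

lemma exists_SL_mul_upper_eq_diag_mul {α β D : ℤ} (hD : D ≠ 0)
    (h : ∀ z : ℤ, Prime z → z ∣ α → z ∣ β → ¬ z ∣ D) :
    ∃ δ g : SL(2, ℤ), (δ : GL2ℤ) * !![α, β; 0, D] = !![α * D, 0; 0, 1] * g := by
  obtain ⟨t, u, v, huv⟩ := Int.exists_isCoprime_add_mul hD h
  refine ⟨⟨!![D, -(β + t * α); u, v], ?_⟩, ⟨!![1, -t; u * α, 1 - u * α * t], ?_⟩, ?_⟩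
  · rw [Matrix.det_fin_two_of]
    linear_combination huv
  · rw [Matrix.det_fin_two_of]
    ring
  · ext i j
    fin_cases i <;> fin_cases j <;> simp [Matrix.mul_apply]
    exacts [mul_comm D α, by ring, by linear_combination huv]

lemma Delta.exists_SL_mul_eq_sqRep_mul {M : ℕ} (hM : 0 < M) (m : Delta M) :
    ∃ (a : SqDivisor M) (δ g : SL(2, ℤ)), (δ : GL2ℤ) * m.1 = (sqRep hM a).1 * g := by
  obtain ⟨A, h10, h00, hdet, -, -⟩ := m
  set c : ℕ := Int.gcd (A 0 0) (Int.gcd (A 0 1) (A 1 1))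
  have dvd_c : ∀ k : ℤ, k ∣ A 0 0 → k ∣ A 0 1 → k ∣ A 1 1 → k ∣ c := fun k h₀ h₁ h₂ =>
    Int.dvd_coe_gcd h₀ (Int.dvd_coe_gcd h₁ h₂)
  obtain ⟨α, hα⟩ : (c : ℤ) ∣ A 0 0 := Int.gcd_dvd_left _ _
  obtain ⟨β, hβ⟩ : (c : ℤ) ∣ A 0 1 := (Int.gcd_dvd_right _ _).trans (Int.gcd_dvd_left _ _)
  obtain ⟨D, hD⟩ : (c : ℤ) ∣ A 1 1 := (Int.gcd_dvd_right _ _).trans (Int.gcd_dvd_right _ _)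
  have hc : 0 < c := Int.gcd_pos_of_ne_zero_left _ h00.ne'
  have hcZ : (c : ℤ) ≠ 0 := by exact_mod_cast hc.ne'
  have hM' : (M : ℤ) = (c * c : ℕ) * (α * D) := by
    push_cast
    rw [← hdet, hα, hD]
    ring
  have hαD : α * D ≠ 0 := by
    rintro h0
    rw [h0, mul_zero] at hM'
    omega
  have hcM : c * c ∣ M := Int.natCast_dvd_natCast.mp ⟨_, hM'⟩
  have hN : ((M / (c * c) : ℕ) : ℤ) = α * D := by
    rw [Int.natCast_div, hM', Int.mul_ediv_cancel_left _ (by positivity)]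
  have primitive : ∀ z : ℤ, Prime z → z ∣ α → z ∣ β → ¬ z ∣ D := fun z hz hzα hzβ hzD => by
    refine hz.not_dvd_one ((mul_dvd_mul_iff_right hcZ).mp ?_)
    rw [one_mul]
    refine dvd_c _ ?_ ?_ ?_ <;> [rw [hα]; rw [hβ]; rw [hD]] <;> rw [mul_comm] <;>
      exact mul_dvd_mul_left _ ‹_›
  obtain ⟨δ, g, hδg⟩ := exists_SL_mul_upper_eq_diag_mul (right_ne_zero_of_mul hαD) primitive
  have hA : A = (c : ℤ) • !![α, β; 0, D] := by
    ext i j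
    fin_cases i <;> fin_cases j <;> simp [hα, hβ, hD, h10]
  refine ⟨⟨c, hc, hcM⟩, δ, g, ?_⟩
  simp only [sqRep, hN, hA, Matrix.mul_smul, Matrix.smul_mul, hδg]

namespace HeckeData

variable {M : ℕ} {bar : Delta M → SL(2, ℤ) → Delta M} {coc : Delta M → SL(2, ℤ) → SL(2, ℤ)}

lemma bar_one (hd : HeckeData M bar coc) (m : Delta M) : bar m 1 = m :=
  Delta.eq_of_SL_mul_eq (coc m 1) 1 <| by
    rw [hd m 1, Matrix.SpecialLinearGroup.coe_one, one_mul, mul_one]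

lemma bar_mul (hd : HeckeData M bar coc) (m : Delta M) (γ δ : SL(2, ℤ)) :
    bar (bar m γ) δ = bar m (γ * δ) :=
  Delta.eq_of_SL_mul_eq (coc m γ * coc (bar m γ) δ) (coc m (γ * δ)) <| by
    simp only [Matrix.SpecialLinearGroup.coe_mul, mul_assoc, hd (bar m γ) δ, hd m (γ * δ)]
    rw [← mul_assoc, hd m γ, mul_assoc]

lemma eq_bar_inv_iff (hd : HeckeData M bar coc) (m m' : Delta M) (γ : SL(2, ℤ)) :
    m = bar m' γ⁻¹ ↔ bar m γ = m' := by
  constructor <;> rintro rfl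
  · rw [hd.bar_mul, inv_mul_cancel, hd.bar_one]
  · rw [hd.bar_mul, mul_inv_cancel, hd.bar_one]

lemma bar_eq_bar_iff (hd : HeckeData M bar coc) (m m' : Delta M) (g g' : SL(2, ℤ)) :
    bar m g = bar m' g' ↔
      ∃ δ : SL(2, ℤ), (δ : GL2ℤ) * m.1 = m'.1 * ((g' * g⁻¹ : SL(2, ℤ)) : GL2ℤ) := by
  have shift : ∀ δ : SL(2, ℤ), (δ : GL2ℤ) * (m.1 * (g : GL2ℤ)) = m'.1 * (g' : GL2ℤ) ↔
      (δ : GL2ℤ) * m.1 = m'.1 * ((g' * g⁻¹ : SL(2, ℤ)) : GL2ℤ) := fun δ => by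
    rw [← mul_assoc, Matrix.SpecialLinearGroup.mul_coe_eq_iff,
      Matrix.SpecialLinearGroup.coe_mul, mul_assoc]
  simp only [← shift]
  constructor
  · intro h
    refine ⟨coc m' g' * (coc m g)⁻¹, ?_⟩
    rw [← hd m g, ← hd m' g', h, ← mul_assoc, ← Matrix.SpecialLinearGroup.coe_mul,
      inv_mul_cancel_right]
  · rintro ⟨δ, hδ⟩
    apply Delta.eq_of_SL_mul_eq (δ * coc m g) (coc m' g')
    rw [hd m' g', ← hδ, Matrix.SpecialLinearGroup.coe_mul, mul_assoc, hd m g]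

lemma dvd_of_bar_sqRep_eq (hd : HeckeData M bar coc) (hM : 0 < M) {a a' : SqDivisor M}
    {g g' : SL(2, ℤ)} (h : bar (sqRep hM a) g = bar (sqRep hM a') g') : a.1 ∣ a'.1 := by
  obtain ⟨δ, hδ⟩ := (hd.bar_eq_bar_iff _ _ g g').mp h
  have key := congrFun₂ ((Matrix.SpecialLinearGroup.mul_coe_eq_iff _).mp hδ.symm) 1 1
  simp only [sqRep, Matrix.smul_mul, Matrix.mul_smul, Matrix.smul_apply, smul_eq_mul] at key
  exact Int.natCast_dvd_natCast.mp ⟨_, by simpa using key⟩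

lemma bar_sqRep_eq_iff (hd : HeckeData M bar coc) (hM : 0 < M) (a a' : SqDivisor M)
    (g g' : SL(2, ℤ)) :
    bar (sqRep hM a) g = bar (sqRep hM a') g' ↔
      a = a' ∧ g' * g⁻¹ ∈ Gamma0 (M / (a.1 * a.1)) := by
  constructor
  · intro h
    obtain rfl : a = a' := Subtype.ext <|
      Nat.dvd_antisymm (hd.dvd_of_bar_sqRep_eq hM h) (hd.dvd_of_bar_sqRep_eq hM h.symm)
    exact ⟨rfl, (exists_SL_mul_sqRep_iff hM a _).mp ((hd.bar_eq_bar_iff _ _ _ _).mp h)⟩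
  · rintro ⟨rfl, hg⟩
    exact (hd.bar_eq_bar_iff _ _ _ _).mpr ((exists_SL_mul_sqRep_iff hM a _).mpr hg)

def cosetsToDelta (hd : HeckeData M bar coc) (hM : 0 < M)
    (p : Σ a : SqDivisor M, Cos (Gamma0 (M / (a.1 * a.1)))) : Delta M :=
  Quotient.lift (bar (sqRep hM p.1)) (fun g g' hg =>
    (hd.bar_sqRep_eq_iff hM _ _ g g').mpr ⟨rfl, QuotientGroup.rightRel_apply.mp hg⟩) p.2

lemma cosetsToDelta_cosMul (hd : HeckeData M bar coc) (hM : 0 < M) (a : SqDivisor M)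
    (c : Cos (Gamma0 (M / (a.1 * a.1)))) (γ : SL(2, ℤ)) :
    hd.cosetsToDelta hM ⟨a, cosMul _ c γ⟩ = bar (hd.cosetsToDelta hM ⟨a, c⟩) γ := by
  induction c using Quotient.ind
  exact (hd.bar_mul _ _ _).symm

lemma cosetsToDelta_bijective (hd : HeckeData M bar coc) (hM : 0 < M) :
    Function.Bijective (hd.cosetsToDelta hM) := by
  constructor
  · rintro ⟨a, c⟩ ⟨a', c'⟩ h
    induction c using Quotient.ind
    induction c' using Quotient.ind
    obtain ⟨rfl, hg⟩ := (hd.bar_sqRep_eq_iff hM _ _ _ _).mp h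
    exact congrArg (Sigma.mk a) (Quotient.sound (QuotientGroup.rightRel_apply.mpr hg))
  · intro m
    obtain ⟨a, δ, g, h⟩ := Delta.exists_SL_mul_eq_sqRep_mul hM m
    exact ⟨⟨a, mkCos _ g⟩, Delta.eq_of_SL_mul_eq (coc _ g) δ ((hd _ g).trans h.symm)⟩

lemma heckeRep_oneRep_mulVec (hd : HeckeData M bar coc) (γ : SL(2, ℤ))
    (x : Unit × Delta M → ℂ) :
    (heckeRep M oneRep bar coc γ).mulVec x = fun p => x ((), bar p.2 γ) := by
  funext p
  rw [Matrix.mulVec, dotProduct, Fintype.sum_eq_single ((), bar p.2 γ)]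
  · simp [heckeRep, oneRep, hd.eq_bar_inv_iff]
  · intro q hq
    have : p.2 ≠ bar q.2 γ⁻¹ := fun h => hq (Prod.ext rfl ((hd.eq_bar_inv_iff _ _ _).mp h).symm)
    simp [heckeRep, this]

end HeckeData

end VVMF

open VVMF

set_option maxHeartbeats 1000000 in
/-- For every positive integer `M` there is an isomorphism of
`SL₂(ℤ)`-representations `T_M 𝟙 ≅ ⊕_{a² ∣ M} Ind_{Γ₀(M/a²)} 𝟙`, where `a` runs over the
positive integers whose square divides `M` and each summand is the permutation
representation of `SL₂(ℤ)` on `ℂ[Γ₀(M/a²)\SL₂(ℤ)]` (with `γ·𝔢_β = 𝔢_{βγ⁻¹}`, i.e. acting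
on functions by `(γ·φ)(c) = φ(c·γ)`). -/
theorem heckeRep_trivial_decomposition (M : ℕ) (hM : 0 < M)
    (bar : Delta M → SL(2, ℤ) → Delta M) (coc : Delta M → SL(2, ℤ) → SL(2, ℤ))
    (hd : HeckeData M bar coc) :
    ∃ e : ((Unit × Delta M) → ℂ) ≃ₗ[ℂ]
        ((Σ a : {a : ℕ // 0 < a ∧ a * a ∣ M},
          Cos (Gamma0 (M / (a.1 * a.1)))) → ℂ),
      ∀ (γ : SL(2, ℤ)) (x : (Unit × Delta M) → ℂ),
        e ((heckeRep M oneRep bar coc γ).mulVec x) =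
          fun p => e x ⟨p.1, cosMul (Gamma0 (M / (p.1.1 * p.1.1))) p.2 γ⟩ := by
  let ψ := (Equiv.ofBijective _ (hd.cosetsToDelta_bijective hM)).trans
    (Equiv.punitProd (Delta M)).symm
  refine ⟨LinearEquiv.funCongrLeft ℂ ℂ ψ, fun γ x => funext fun p => ?_⟩
  change (heckeRep M oneRep bar coc γ).mulVec x ((), hd.cosetsToDelta hM p) =
    x ((), hd.cosetsToDelta hM ⟨p.1, cosMul _ p.2 γ⟩)
  rw [hd.heckeRep_oneRep_mulVec, hd.cosetsToDelta_cosMul]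
end
end

section
/- Let χ be a Dirichlet character mod N, M a positive integer with gcd(M,N) = 1, and k ∈ ℤ. Let ι_Hecke : ρ_χ → T_M ρ_χ be the inclusion 𝔢_γ ↦ M^{k/2−1} Σ_{m∈Δ_M} χ(m) \overline{χ}(I_{I₂}(I_m(γ))) 𝔢_{I_m(γ)} ⊗ 𝔢_{m·γ}, and π_Hecke : T_M ρ_χ → ρ_χ its adjoint projection (⟨π_Hecke(x), w⟩ = ⟨x, ι_Hecke(w)⟩). Then for every f ∈ M_k(χ) and every v ∈ V(ρ_χ): ⟨Ind(f|_{k,χ}T_M), v⟩ = ⟨π_Hecke(T_M Ind f), v⟩ = ⟨T_M Ind f, ι_Hecke(v)⟩, where (f|_{k,χ}T_M)(τ) = M^{k−1} Σ_{d|M, 0≤b<d} d^{−k} \overline{χ}(d) f((M d^{−1} τ + b)/d) is the classical Hecke operator. -/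
/-!
Fix a coset `Γ₀(N) β`. By the definition of `ι_Hecke`, the `β`-component of `π_Hecke (T_M Ind f)`
is `M^{k/2-1} ∑_{m ∈ Δ_M} conj(χ(m)) χ(I_{I₂}(g_m)) (f ∣ sec(Γ₀(N) g_m)) ∣ overline{mβ}` with
`g_m = I_m(β)`. Modularity of `f` says that `χ(I_{I₂}(g))` turns `f ∣ sec(Γ₀(N) g)` back into
`f ∣ g`, and `mβ = I_m(β) · overline{mβ}` turns `(f ∣ I_m(β)) ∣ overline{mβ}` into `(f ∣ m) ∣ β`.
As `(a/d)^{k/2} = M^{k/2} d^{-k}` on `Δ_M` and `Δ_M ≅ {(d, b) : d ∣ M, 0 ≤ b < d}`, what remains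
is `(f ∣_{k,χ} T_M) ∣ β`, the `β`-component of `Ind(f ∣_{k,χ} T_M)`. The second identity is the
adjointness of `ι_Hecke` and `π_Hecke`.
-/

open scoped MatrixGroups Manifold Kronecker ComplexConjugate Classical ComplexOrder
open Matrix UpperHalfPlane Complex Filter MeasureTheory CongruenceSubgroup

noncomputable section

namespace VVMF

/-! ### Classical operators, special matrices, and intertwining inclusions -/

set_option linter.unnecessarySeqFocus false

lemma denomZ_eq_denom (g : SL(2, ℤ)) (τ : ℍ) :
    denomZ g τ = denom (SpecialLinearGroup.mapGL ℝ g) τ := by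
  simp [denomZ, denom]

lemma smul_eq_mapGL_smul (g : SL(2, ℤ)) (τ : ℍ) :
    g • τ = SpecialLinearGroup.mapGL ℝ g • τ := rfl

lemma denom_mul_of_det_pos (g : GL (Fin 2) ℝ) {h : GL (Fin 2) ℝ} (hh : 0 < h.det.val)
    (τ : ℍ) : denom (g * h) τ = denom g (h • τ : ℍ) * denom h τ := by
  rw [denom_cocycle_σ, σ, if_pos hh]
  rfl

lemma denomZ_mul (g s : SL(2, ℤ)) (τ : ℍ) :
    denomZ (g * s) τ = denomZ g (s • τ) * denomZ s τ := by
  simp only [denomZ_eq_denom, map_mul]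
  exact denom_mul_of_det_pos _ (by simp) τ

lemma cslash_mul (k : ℤ) (g s : SL(2, ℤ)) (f : ℍ → ℂ) (τ : ℍ) :
    cslash k (g * s) f τ = denomZ s τ ^ (-k) * cslash k g f (s • τ) := by
  simp only [cslash, mul_smul, denomZ_mul, mul_zpow]
  ring

lemma dirSL_mul_dirSL_inv {N : ℕ} (χ : DirichletCharacter ℂ N) {γ : SL(2, ℤ)}
    (hγ : γ ∈ Gamma0 N) : dirSL χ γ * dirSL χ γ⁻¹ = 1 := by
  have hdet : ((γ 0 0 * γ 1 1 - γ 0 1 * γ 1 0 : ℤ) : ZMod N) = 1 := by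
    rw [← det_fin_two, γ.2, Int.cast_one]
  push_cast at hdet
  rw [Gamma0_mem.mp hγ, mul_zero, sub_zero] at hdet
  have hinv : γ⁻¹ 1 1 = γ 0 0 := by simp [SpecialLinearGroup.SL2_inv_expl]
  rw [dirSL, dirSL, hinv, ← map_mul, mul_comm, hdet, map_one]

lemma natCast_zpow_sub_one_eq_rpow_mul_rpow {M : ℕ} (hM : 0 < M) (k : ℤ) :
    (M : ℂ) ^ (k - 1) =
      (((M : ℝ) ^ ((k : ℝ) / 2 - 1) : ℝ) : ℂ) * (((M : ℝ) ^ ((k : ℝ) / 2) : ℝ) : ℂ) := by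
  rw [← ofReal_mul, ← Real.rpow_add (by exact_mod_cast hM),
    show (k : ℝ) / 2 - 1 + k / 2 = ((k - 1 : ℤ) : ℝ) by push_cast; ring, Real.rpow_intCast,
    ofReal_zpow, ofReal_natCast]

section Gamma0Transformation

variable {N : ℕ} {k : ℤ} {χ : DirichletCharacter ℂ N} {f : ℍ → ℂ}

lemma cslash_of_mem_Gamma0 (hf : ∀ γ ∈ Gamma0 N, (fun τ => dirSL χ γ⁻¹ * cslash k γ f τ) = f)
    {γ : SL(2, ℤ)} (hγ : γ ∈ Gamma0 N) (τ : ℍ) :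
    cslash k γ f τ = dirSL χ γ * f τ := by
  rw [← congrFun (hf γ hγ) τ, ← mul_assoc, dirSL_mul_dirSL_inv χ hγ, one_mul]

lemma cocVal_mul_cslash_sec
    (hf : ∀ γ ∈ Gamma0 N, (fun τ => dirSL χ γ⁻¹ * cslash k γ f τ) = f)
    {sec : Cos (Gamma0 N) → SL(2, ℤ)} (hsec : IsSection (Gamma0 N) sec) (δ : SL(2, ℤ))
    (τ : ℍ) :
    cocVal χ sec δ * cslash k (sec (mkCos (Gamma0 N) δ)) f τ = cslash k δ f τ := by
  set β := sec (mkCos (Gamma0 N) δ)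
  have hmem : δ * β⁻¹ ∈ Gamma0 N :=
    QuotientGroup.rightRel_apply.mp (Quotient.eq''.mp (hsec.1 (mkCos (Gamma0 N) δ)))
  have hcoc : cocVal χ sec δ = dirSL χ (δ * β⁻¹) := by
    have hcos : cosMul (Gamma0 N) (mkCos (Gamma0 N) 1) δ = mkCos (Gamma0 N) δ :=
      congrArg (mkCos (Gamma0 N)) (one_mul δ)
    rw [cocVal, indCoc, hsec.2, one_mul, hcos]
  conv_rhs => rw [← inv_mul_cancel_right δ β, cslash_mul, cslash_of_mem_Gamma0 hf hmem]
  rw [hcoc, cslash]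
  ring

end Gamma0Transformation

namespace Delta

variable {M : ℕ} (m : Delta M)

lemma d_pos_s11 : 0 < m.1 1 1 := m.2.2.2.2.1.trans_lt m.2.2.2.2.2

lemma pos_of_delta (m : Delta M) : 0 < M := by
  have h := mul_pos m.2.2.1 m.d_pos_s11
  rw [m.2.2.2.1] at h
  exact_mod_cast h

lemma ext_of_entries {m' : Delta M} (hb : m.1 0 1 = m'.1 0 1) (hd : m.1 1 1 = m'.1 1 1) :
    m = m' := by
  have ha : m.1 0 0 = m'.1 0 0 :=
    mul_right_cancel₀ m.d_pos_s11.ne' (by rw [m.2.2.2.1, hd, m'.2.2.2.1])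
  apply Subtype.ext
  ext i j
  fin_cases i <;> fin_cases j
  exacts [ha, hb, m.2.1.trans m'.2.1.symm, hd]

lemma slashFactor_eq (k : ℤ) :
    (((m.1 0 0 : ℤ) : ℝ) / ((m.1 1 1 : ℤ) : ℝ)) ^ ((k : ℝ) / 2) =
      (M : ℝ) ^ ((k : ℝ) / 2) * ((m.1 1 1 : ℤ) : ℝ) ^ (-k) := by
  have hd : (0 : ℝ) < ((m.1 1 1 : ℤ) : ℝ) := by exact_mod_cast m.d_pos_s11
  have hdet : ((m.1 0 0 : ℤ) : ℝ) * ((m.1 1 1 : ℤ) : ℝ) = M := by exact_mod_cast m.2.2.2.1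
  have hquot : ((m.1 0 0 : ℤ) : ℝ) / ((m.1 1 1 : ℤ) : ℝ) =
      M * ((m.1 1 1 : ℤ) : ℝ) ^ (-2 : ℝ) := by
    rw [Real.rpow_neg hd.le, ← hdet, Real.rpow_two]
    field_simp
  rw [hquot, Real.mul_rpow (Nat.cast_nonneg M) (Real.rpow_nonneg hd.le _), ← Real.rpow_mul hd.le,
    show (-2 : ℝ) * (k / 2) = ((-k : ℤ) : ℝ) by push_cast; ring, Real.rpow_intCast]

def toGL : GL (Fin 2) ℝ :=
  GeneralLinearGroup.mkOfDetNeZero (m.1.map (Int.cast : ℤ → ℝ)) (by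
    simp only [det_fin_two, map_apply, m.2.1, Int.cast_zero, mul_zero, sub_zero]
    exact mul_ne_zero (by exact_mod_cast m.2.2.1.ne') (by exact_mod_cast m.d_pos_s11.ne'))

lemma toGL_det_pos : 0 < m.toGL.det.val := by
  show 0 < (m.1.map (Int.cast : ℤ → ℝ)).det
  simp only [det_fin_two, map_apply, m.2.1, Int.cast_zero, mul_zero, sub_zero]
  exact mul_pos (by exact_mod_cast m.2.2.1) (by exact_mod_cast m.d_pos_s11)

lemma denom_toGL (τ : ℍ) : denom m.toGL τ = ((m.1 1 1 : ℤ) : ℂ) := by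
  simp [denom, toGL, m.2.1]

lemma utAct_eq_smul (τ : ℍ) : utAct m.1 τ = m.toGL • τ := by
  have h : (((m.1 0 0 : ℤ) : ℂ) * τ + ((m.1 0 1 : ℤ) : ℂ)) / ((m.1 1 1 : ℤ) : ℂ) =
      ↑(m.toGL • τ) := by
    rw [coe_smul_of_det_pos m.toGL_det_pos, denom_toGL]
    simp [num, toGL]
  rw [utAct, dif_pos (h ▸ (m.toGL • τ).im_pos)]
  exact UpperHalfPlane.ext h

def ofDivisor {d b : ℕ} (hd : d ∈ M.divisors) (hb : b < d) : Delta M :=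
  ⟨!![((M / d : ℕ) : ℤ), (b : ℤ); 0, (d : ℤ)], by
    obtain ⟨hdvd, hM⟩ := Nat.mem_divisors.mp hd
    have hMd : 0 < M / d := Nat.div_pos (Nat.le_of_dvd (Nat.pos_of_ne_zero hM) hdvd) (by omega)
    refine ⟨rfl, by simp; omega, ?_, by simp, by simpa using hb⟩
    simp only [of_apply, cons_val', cons_val_zero, cons_val_one, empty_val', cons_val_fin_one]
    exact_mod_cast Nat.div_mul_cancel hdvd⟩

end Delta

lemma classicalHecke_eq_sum_delta {N : ℕ} (M : ℕ) (k : ℤ) (χ : DirichletCharacter ℂ N)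
    (f : ℍ → ℂ) (τ : ℍ) :
    classicalHecke M k χ f τ = (M : ℂ) ^ (k - 1) * ∑ m : Delta M,
      ((m.1 1 1 : ℤ) : ℂ) ^ (-k) * conj (χ ((m.1 1 1 : ℤ) : ZMod N)) * f (utAct m.1 τ) := by
  rw [classicalHecke, Finset.sum_sigma']
  congr 1
  refine Finset.sum_bij (fun p hp => Delta.ofDivisor (Finset.mem_sigma.mp hp).1
    (Finset.mem_range.mp (Finset.mem_sigma.mp hp).2)) (fun _ _ => Finset.mem_univ _) ?_ ?_ ?_
  · rintro ⟨d, b⟩ _ ⟨d', b'⟩ _ h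
    have hb := congrArg (fun m : Delta M => m.1 0 1) h
    have hd := congrArg (fun m : Delta M => m.1 1 1) h
    simp only [Delta.ofDivisor, of_apply, cons_val', cons_val_zero, cons_val_one, empty_val',
      cons_val_fin_one, Nat.cast_inj] at hb hd
    subst hb hd
    rfl
  · intro m _
    have hb := m.2.2.2.2.1
    have hbd := m.2.2.2.2.2
    refine ⟨⟨(m.1 1 1).toNat, (m.1 0 1).toNat⟩, ?_, ?_⟩
    · simp only [Finset.mem_sigma, Nat.mem_divisors, Finset.mem_range]
      refine ⟨⟨⟨(m.1 0 0).toNat, ?_⟩, m.pos_of_delta.ne'⟩, by omega⟩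
      zify
      rw [Int.toNat_of_nonneg m.d_pos_s11.le, Int.toNat_of_nonneg m.2.2.1.le, mul_comm, m.2.2.2.1]
    · apply Delta.ext_of_entries <;>
        simp only [Delta.ofDivisor, Int.ofNat_toNat, of_apply, cons_val', cons_val_zero,
          cons_val_one, cons_val_fin_one, sup_eq_left] <;> omega
  · rintro ⟨d, b⟩ _
    simp [Delta.ofDivisor]

namespace HeckeData

variable {M : ℕ} {bar : Delta M → SL(2, ℤ) → Delta M} {coc : Delta M → SL(2, ℤ) → SL(2, ℤ)}

lemma mapGL_mul_toGL (hd : HeckeData M bar coc) (m : Delta M) (β : SL(2, ℤ)) :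
    SpecialLinearGroup.mapGL ℝ (coc m β) * (bar m β).toGL =
      m.toGL * SpecialLinearGroup.mapGL ℝ β := by
  ext : 1
  have h := congrArg (Int.castRingHom ℝ).mapMatrix (hd m β)
  rw [map_mul, map_mul] at h
  exact h

lemma utAct_smul (hd : HeckeData M bar coc) (m : Delta M) (β : SL(2, ℤ)) (τ : ℍ) :
    utAct m.1 (β • τ) = coc m β • utAct (bar m β).1 τ := by
  rw [Delta.utAct_eq_smul, Delta.utAct_eq_smul, smul_eq_mapGL_smul, smul_eq_mapGL_smul,
    ← mul_smul, ← mul_smul, hd.mapGL_mul_toGL]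

lemma denomZ_mul_d (hd : HeckeData M bar coc) (m : Delta M) (β : SL(2, ℤ)) (τ : ℍ) :
    denomZ (coc m β) (utAct (bar m β).1 τ) * ((bar m β).1 1 1 : ℂ) =
      (m.1 1 1 : ℂ) * denomZ β τ := by
  have h : denom (SpecialLinearGroup.mapGL ℝ (coc m β) * (bar m β).toGL) τ =
      denom (m.toGL * SpecialLinearGroup.mapGL ℝ β) τ := by
    rw [hd.mapGL_mul_toGL]
  rw [denom_mul_of_det_pos _ (bar m β).toGL_det_pos, denom_mul_of_det_pos _ (by simp),
    Delta.denom_toGL, Delta.denom_toGL, ← Delta.utAct_eq_smul] at h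
  rw [denomZ_eq_denom, denomZ_eq_denom, h]

/-- `(f ∣ I_m(β)) ∣ overline{mβ} = (f ∣ m) ∣ β`, with `f ∣ m` written out via `slashFactor_eq`. -/
lemma slash_cslash_coc (hd : HeckeData M bar coc) (k : ℤ) (f : ℍ → ℂ) (m : Delta M)
    (β : SL(2, ℤ)) (τ : ℍ) :
    (((((bar m β).1 0 0 : ℤ) : ℝ) / (((bar m β).1 1 1 : ℤ) : ℝ)) ^ ((k : ℝ) / 2) : ℝ) *
        cslash k (coc m β) f (utAct (bar m β).1 τ) =
      ((M : ℝ) ^ ((k : ℝ) / 2) : ℝ) * ((m.1 1 1 : ℤ) : ℂ) ^ (-k) *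
        (denomZ β τ ^ (-k) * f (utAct m.1 (β • τ))) := by
  have h := congrArg (· ^ (-k)) (hd.denomZ_mul_d m β τ)
  simp only [mul_zpow] at h
  rw [Delta.slashFactor_eq, cslash, ← hd.utAct_smul]
  push_cast
  linear_combination (((M : ℝ) ^ ((k : ℝ) / 2) : ℝ) : ℂ) * f (utAct m.1 (β • τ)) * h

end HeckeData

lemma pairF_conjTranspose_mulVec {α β : Type*} [Fintype α] [Fintype β] (A : Matrix β α ℂ)
    (x : ℍ → β → ℂ) (v : α → ℂ) :
    pairF (fun τ => Aᴴ *ᵥ x τ) v = pairF x (A *ᵥ v) := by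
  funext τ
  simp only [pairF, mulVec, dotProduct, conjTranspose_apply, map_sum, map_mul,
    Finset.sum_mul, Finset.mul_sum]
  rw [Finset.sum_comm]
  refine Finset.sum_congr rfl fun b _ => Finset.sum_congr rfl fun a _ => ?_
  simp only [RCLike.star_def]
  ring

section Hecke

variable {N : ℕ} [NeZero N] {M : ℕ} {k : ℤ} {χ : DirichletCharacter ℂ N}
  {sec : Cos (Gamma0 N) → SL(2, ℤ)}
  {bar : Delta M → SL(2, ℤ) → Delta M} {coc : Delta M → SL(2, ℤ) → SL(2, ℤ)}

lemma iotaHecke_conjTranspose_mulVec (x : Cos (Gamma0 N) × Delta M → ℂ) (c : Cos (Gamma0 N)) :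
    ((iotaHecke M k χ sec bar coc)ᴴ *ᵥ x) c =
      (((M : ℝ) ^ ((k : ℝ) / 2 - 1) : ℝ) : ℂ) * ∑ m : Delta M,
        conj (χ ((m.1 1 1 : ℤ) : ZMod N)) * cocVal χ sec (coc m (sec c)) *
          x (mkCos (Gamma0 N) (coc m (sec c)), bar m (sec c)) := by
  simp only [mulVec, dotProduct, conjTranspose_apply, iotaHecke, of_apply, RCLike.star_def,
    map_mul, map_sum, conj_ofReal, apply_ite (starRingEnd ℂ), map_zero, conj_conj,
    Finset.mul_sum, Finset.sum_mul]
  rw [Finset.sum_comm]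
  refine Finset.sum_congr rfl fun m _ => ?_
  rw [Fintype.sum_eq_single (mkCos (Gamma0 N) (coc m (sec c)), bar m (sec c))]
  · simp only [and_self, if_true]
    ring
  · rintro ⟨c', m'⟩ hne
    rw [if_neg (fun h => hne (Prod.ext h.2 h.1)), mul_zero, zero_mul]

lemma indForm_classicalHecke {f : ℍ → ℂ}
    (hf : ∀ γ ∈ Gamma0 N, (fun τ => dirSL χ γ⁻¹ * cslash k γ f τ) = f)
    (hsec : IsSection (Gamma0 N) sec) (hd : HeckeData M bar coc) (τ : ℍ) :
    indForm (Gamma0 N) sec k (classicalHecke M k χ f) τ =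
      (iotaHecke M k χ sec bar coc)ᴴ *ᵥ heckeT M k (indForm (Gamma0 N) sec k f) τ := by
  funext c
  rw [iotaHecke_conjTranspose_mulVec, indForm, cslash, classicalHecke_eq_sum_delta,
    Finset.mul_sum, Finset.mul_sum, Finset.mul_sum]
  refine Finset.sum_congr rfl fun m _ => ?_
  have hterm : cocVal χ sec (coc m (sec c)) *
      heckeT M k (indForm (Gamma0 N) sec k f) τ
        (mkCos (Gamma0 N) (coc m (sec c)), bar m (sec c)) =
      (((M : ℝ) ^ ((k : ℝ) / 2) : ℝ) : ℂ) * ((m.1 1 1 : ℤ) : ℂ) ^ (-k) *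
        (denomZ (sec c) τ ^ (-k) * f (utAct m.1 (sec c • τ))) := by
    rw [← hd.slash_cslash_coc, ← cocVal_mul_cslash_sec hf hsec]
    simp only [heckeT, mslash, indForm, Pi.smul_apply, smul_eq_mul]
    ring
  rw [mul_assoc _ (cocVal _ _ _), hterm, natCast_zpow_sub_one_eq_rpow_mul_rpow m.pos_of_delta]
  ring

end Hecke

end VVMF

open VVMF

theorem classical_hecke_from_vector_valued_general {N : ℕ} [NeZero N] (M : ℕ)
    (k : ℤ) (χ : DirichletCharacter ℂ N)
    (sec : Cos (Gamma0 N) → SL(2, ℤ)) (hsec : IsSection (Gamma0 N) sec)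
    (bar : Delta M → SL(2, ℤ) → Delta M) (coc : Delta M → SL(2, ℤ) → SL(2, ℤ))
    (hd : HeckeData M bar coc)
    (f : ℍ → ℂ) (hf : IsModFormChi k χ f) (v : Cos (Gamma0 N) → ℂ) :
    pairF (indForm (Gamma0 N) sec k (classicalHecke M k χ f)) v =
      pairF (fun τ => (iotaHecke M k χ sec bar coc)ᴴ.mulVec
        (heckeT M k (indForm (Gamma0 N) sec k f) τ)) v ∧
    pairF (indForm (Gamma0 N) sec k (classicalHecke M k χ f)) v =
      pairF (heckeT M k (indForm (Gamma0 N) sec k f))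
        ((iotaHecke M k χ sec bar coc).mulVec v) := by
  have hInd : indForm (Gamma0 N) sec k (classicalHecke M k χ f) =
      fun τ => (iotaHecke M k χ sec bar coc)ᴴ *ᵥ heckeT M k (indForm (Gamma0 N) sec k f) τ :=
    funext (indForm_classicalHecke hf.2.1 hsec hd)
  rw [hInd, pairF_conjTranspose_mulVec]
  exact ⟨rfl, rfl⟩

/-- The inclusion `ι_Hecke` and the adjoint projection
`π_Hecke = ι_Heckeᴴ` intertwine the vector-valued Hecke operator and the classical Hecke
operator with the induction map: for every `f ∈ M_k(χ)` and `v ∈ V(ρ_χ)`,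
`⟨Ind(f ∣_{k,χ} T_M), v⟩ = ⟨π_Hecke(T_M Ind f), v⟩ = ⟨T_M Ind f, ι_Hecke v⟩`. -/
theorem classical_hecke_from_vector_valued {N : ℕ} [NeZero N] (M : ℕ) (hM : 0 < M)
    (hcop : Nat.Coprime M N) (k : ℤ) (χ : DirichletCharacter ℂ N)
    (sec : Cos (Gamma0 N) → SL(2, ℤ)) (hsec : IsSection (Gamma0 N) sec)
    (bar : Delta M → SL(2, ℤ) → Delta M) (coc : Delta M → SL(2, ℤ) → SL(2, ℤ))
    (hd : HeckeData M bar coc)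
    (f : ℍ → ℂ) (hf : IsModFormChi k χ f) (v : Cos (Gamma0 N) → ℂ) :
    pairF (indForm (Gamma0 N) sec k (classicalHecke M k χ f)) v =
      pairF (fun τ => (iotaHecke M k χ sec bar coc)ᴴ.mulVec
        (heckeT M k (indForm (Gamma0 N) sec k f) τ)) v ∧
    pairF (indForm (Gamma0 N) sec k (classicalHecke M k χ f)) v =
      pairF (heckeT M k (indForm (Gamma0 N) sec k f))
        ((iotaHecke M k χ sec bar coc).mulVec v) :=
  classical_hecke_from_vector_valued_general M k χ sec hsec bar coc hd f hf v
end
end
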